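/- arXiv:2012.01858 — 4 statements merged into one kernel-verified Lean document; each statement's English description precedes it below -/
import Mathlib

section
/- Let K₂ = ℂ[[t,s]][1/(ts)] with a = t−s, and let Q = ℂ((a)). The expansion map E : K₂[a⁻¹] → Q((t)) × Q((s)), defined componentwise by expanding an element as a Laurent series in t (inverting s = t−a, which is invertible in Q((t))) and as a Laurent series in s respectively, is an injective ring homomorphism. -/
/-!
Already `E_t` is injective: on `ℂ[[a]][[t]]` it is the coefficientwise embedding
`ℂ[[a]] ⊂ ℂ((a))` followed by `Q[[t]] ⊂ Q((t))`, and a ring map out of a localization is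
injective as soon as it is injective on the base ring.
-/

noncomputable section

/-- `A = ℂ[[a]]`. -/
abbrev AA : Type := PowerSeries ℂ

/-- `Q = ℂ((a))`. -/
abbrev QQ : Type := LaurentSeries ℂ

/-- `ℂ[[t,s]]`, realized as `ℂ[[a]][[t]]` via `a = t − s` (so `s = t − a`). -/
abbrev BB : Type := PowerSeries AA

/-- The variable `a`. -/
def aa : AA := PowerSeries.X

/-- The variable `t`. -/
def tt : BB := PowerSeries.X

/-- The variable `s = t − a`. -/
def ss : BB := tt - PowerSeries.C (R := AA) aa

/-- `K₂[a⁻¹] = ℂ[[t,s]][1/(ts), 1/a]`. -/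
abbrev LL : Type := Localization.Away (tt * ss * PowerSeries.C (R := AA) aa)

/-- The inclusion `ℂ[[a]] → ℂ((a))`. -/
def ι : AA →+* QQ := HahnSeries.ofPowerSeries ℤ ℂ

theorem IsLocalization.injective_of_injective_comp_algebraMap {R S T : Type*}
    [CommSemiring R] [CommSemiring S] [Algebra R S] (M : Submonoid R) [IsLocalization M S]
    [CommSemiring T] (f : S →+* T) (hf : Function.Injective (f.comp (algebraMap R S))) :
    Function.Injective f :=
  (IsLocalization.injective_iff_map_algebraMap_eq M f).2 fun _ _ =>
    ⟨congrArg _, fun h => congrArg _ (hf h)⟩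

theorem injective_of_apply_algebraMap_eq_ofPowerSeries (Et : LL →+* LaurentSeries QQ)
    (hEt : ∀ f : BB,
      Et (algebraMap BB LL f) = HahnSeries.ofPowerSeries ℤ QQ (PowerSeries.map ι f)) :
    Function.Injective Et := by
  refine IsLocalization.injective_of_injective_comp_algebraMap (S := LL)
    (T := LaurentSeries QQ) (Submonoid.powers (tt * ss * PowerSeries.C (R := AA) aa)) Et ?_
  have hcomp : ⇑(Et.comp (algebraMap BB LL)) =
      HahnSeries.ofPowerSeries ℤ QQ ∘ PowerSeries.map ι := funext hEt
  rw [hcomp]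
  exact HahnSeries.ofPowerSeries_injective.comp
    (PowerSeries.map_injective ι HahnSeries.ofPowerSeries_injective)

theorem stmt1_general
    (Et : LL →+* LaurentSeries QQ)
    (hEt : ∀ f : BB,
      Et (algebraMap BB LL f) =
        HahnSeries.ofPowerSeries ℤ QQ (PowerSeries.map ι f))
    (Es : LL →+* LaurentSeries QQ) :
    Function.Injective (fun x : LL => (Et x, Es x)) := fun _ _ h =>
  injective_of_apply_algebraMap_eq_ofPowerSeries Et hEt (congrArg Prod.fst h)

/-- the expansion map `E = (E_t, E_s) : K₂[a⁻¹] → Q((t)) × Q((s))` is an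
injective ring homomorphism.  Here `E_t` is (the localized extension of) the canonical
inclusion `ℂ[[a]][[t]] → Q((t))`, and `E_s` is (the localized extension of) the
continuous `A`-algebra map sending `t` to `s + a`; these properties characterize the
pair, and any pair of ring homomorphisms satisfying them is injective as a map to the
product. -/
theorem stmt1
    (Et : LL →+* LaurentSeries QQ)
    (hEt : ∀ f : BB,
      Et (algebraMap BB LL f) =
        HahnSeries.ofPowerSeries ℤ QQ (PowerSeries.map ι f))
    (Es : LL →+* LaurentSeries QQ)
    (hEsC : ∀ c : AA,
      Es (algebraMap BB LL (PowerSeries.C (R := AA) c)) = HahnSeries.C (ι c))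
    (hEst : Es (algebraMap BB LL tt) = HahnSeries.single 1 1 + HahnSeries.C (ι aa))
    (hEscont : ∀ (m : ℕ) (f : BB), ∃ g : PowerSeries QQ,
      Es (algebraMap BB LL ((tt * ss) ^ m * f)) =
        HahnSeries.ofPowerSeries ℤ QQ (PowerSeries.X ^ m * g)) :
    Function.Injective (fun x : LL => (Et x, Es x)) :=
  stmt1_general Et hEt Es

end
end

section
/- Let S be a flat ℂ[a]-algebra and Ŝ = S ⊗_{ℂ[a]} ℂ[[a]], so S ⊂ Ŝ ⊂ Ŝ_a and S ⊂ S_a ⊂ Ŝ_a. Let J be an ideal of S_a, Ĵ its extension to Ŝ_a, Î = Ĵ ∩ Ŝ, and I = S ∩ Ĵ. Then Î = I ⊗_{ℂ[a]} ℂ[[a]] (i.e., the extension of I to Ŝ equals Î). -/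
open scoped TensorProduct

noncomputable section

set_option synthInstance.maxHeartbeats 1000000
set_option maxHeartbeats 2000000

theorem flat_of_smul_injective (R M : Type*) [CommRing R] [IsDomain R] [IsPrincipalIdealRing R]
    [AddCommGroup M] [Module R M]
    (h : ∀ r : R, r ≠ 0 → Function.Injective fun m : M => r • m) :
    Module.Flat R M := by
  rw [Module.Flat.iff_rTensor_injective']
  intro I
  obtain ⟨g, hg⟩ := (IsPrincipalIdealRing.principal I).principal
  rw [Ideal.submodule_span_eq] at hg
  have hgmem : g ∈ I := hg ▸ Ideal.mem_span_singleton_self g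
  set s : R →ₗ[R] I := LinearMap.toSpanSingleton R I ⟨g, hgmem⟩ with hs
  have hssurj : Function.Surjective s := by
    rintro ⟨y, hy⟩
    rw [hg, Ideal.mem_span_singleton'] at hy
    obtain ⟨c, hc⟩ := hy
    exact ⟨c, Subtype.ext (by simpa [hs, LinearMap.toSpanSingleton] using hc)⟩
  rw [← LinearMap.ker_eq_bot, eq_bot_iff]
  intro z hz
  obtain ⟨w, rfl⟩ := LinearMap.rTensor_surjective M hssurj z
  have hz' : LinearMap.rTensor M (I.subtype ∘ₗ s) w = 0 := by
    rw [LinearMap.rTensor_comp]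
    exact hz
  have hcomp : I.subtype ∘ₗ s = g • (LinearMap.id : R →ₗ[R] R) := by
    ext c
    simp [hs, LinearMap.toSpanSingleton, mul_comm]
  have hsm : LinearMap.rTensor M (g • (LinearMap.id : R →ₗ[R] R)) =
      g • (LinearMap.id : R ⊗[R] M →ₗ[R] R ⊗[R] M) := by
    apply TensorProduct.ext'
    intro r m
    simp [TensorProduct.smul_tmul']
  rw [hcomp, hsm] at hz'
  by_cases hg0 : g = 0
  · have : s = 0 := by
      ext c
      simp [hs, LinearMap.toSpanSingleton, hg0, Subtype.ext_iff]
    rw [this] at *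
    simp
  · have hw : w = 0 := by
      have he := congrArg (TensorProduct.lid R M) hz'
      simp only [LinearMap.smul_apply, LinearMap.id_apply, map_smul, map_zero] at he
      have := h g hg0 (a₁ := (TensorProduct.lid R M) w) (a₂ := 0) (by simpa using he)
      simpa using (TensorProduct.lid R M).injective this
    simp [hw]

theorem algebraMap_polynomial_powerSeries_injective :
    Function.Injective (algebraMap (Polynomial ℂ) (PowerSeries ℂ)) := by
  intro p q h
  ext n
  have := congrArg (PowerSeries.coeff (R := ℂ) n) h
  simpa [PowerSeries.algebraMap_apply', Polynomial.coeff_coe] using this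

instance : Module.Flat (Polynomial ℂ) (PowerSeries ℂ) := by
  refine flat_of_smul_injective _ _ (fun r hr p q hpq => ?_)
  simp only [Algebra.smul_def] at hpq
  refine mul_left_cancel₀ (fun h0 => hr ?_) hpq
  exact algebraMap_polynomial_powerSeries_injective (by simpa using h0)


theorem aux8 {R S P : Type*} [CommRing R] [CommRing S] [CommRing P]
    [Algebra R S] [Algebra R P] [Module.Flat R P] (r : R)
    {L Lh : Type*} [CommRing L] [CommRing Lh] [Algebra S L] [Algebra (S ⊗[R] P) Lh]
    [IsLocalization.Away (algebraMap R S r) L]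
    [IsLocalization.Away (algebraMap R (S ⊗[R] P) r) Lh]
    (φ : L →+* Lh)
    (hφ : ∀ s : S,
      φ (algebraMap S L s) =
        algebraMap (S ⊗[R] P) Lh (Algebra.TensorProduct.includeLeftRingHom s))
    (J : Ideal L) :
    (J.map φ).comap (algebraMap (S ⊗[R] P) Lh) =
      Ideal.map (Algebra.TensorProduct.includeLeftRingHom : S →+* S ⊗[R] P)
        ((J.map φ).comap
          ((algebraMap (S ⊗[R] P) Lh).comp
            (Algebra.TensorProduct.includeLeftRingHom : S →+* S ⊗[R] P))) := by
  have hf : (algebraMap R (S ⊗[R] P) r) =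
      Algebra.TensorProduct.includeLeftRingHom (algebraMap R S r) := by
    rw [Algebra.TensorProduct.includeLeftRingHom_apply,
      Algebra.TensorProduct.algebraMap_apply]
  set I₀ : Ideal S := J.comap (algebraMap S L) with hI₀
  set K : Ideal (S ⊗[R] P) := I₀.map (Algebra.TensorProduct.includeLeftRingHom) with hK
  set ψ : (S ⊗[R] P) →ₗ[R] (S ⧸ (I₀.restrictScalars R)) ⊗[R] P :=
    LinearMap.rTensor P (I₀.restrictScalars R).mkQ with hψ
  have hfun : ⇑(Algebra.TensorProduct.includeLeft : S →ₐ[R] S ⊗[R] P) =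
      ⇑(Algebra.TensorProduct.includeLeftRingHom : S →+* S ⊗[R] P) := by
    funext a; rfl
  have hKL : K = I₀.map (Algebra.TensorProduct.includeLeft : S →ₐ[R] S ⊗[R] P) := by
    simp only [hK, Ideal.map, hfun]
  have hker : ∀ y : S ⊗[R] P, y ∈ K ↔ ψ y = 0 := by
    intro y
    rw [← Submodule.restrictScalars_mem R K y, hKL, Ideal.map_includeLeft_eq,
      ← rTensor_mkQ (Q := P) (I₀.restrictScalars R)]
    exact LinearMap.mem_ker
  -- multiplication by r is injective on S ⧸ I₀
  have hmu : Function.Injective (LinearMap.lsmul R (S ⧸ (I₀.restrictScalars R)) r) := by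
    rw [← LinearMap.ker_eq_bot, eq_bot_iff]
    intro m hm
    obtain ⟨x, rfl⟩ := Submodule.mkQ_surjective _ m
    have hm' : (I₀.restrictScalars R).mkQ (r • x) = 0 := by
      simpa using hm
    rw [Submodule.mkQ_apply, Submodule.Quotient.mk_eq_zero, Submodule.restrictScalars_mem] at hm'
    have hsmul : r • x = (algebraMap R S r) * x := by rw [Algebra.smul_def]
    rw [hsmul] at hm'
    have hu : IsUnit (algebraMap S L (algebraMap R S r)) :=
      IsLocalization.map_units (M := Submonoid.powers (algebraMap R S r)) L
        ⟨algebraMap R S r, Submonoid.mem_powers _⟩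
    have hx : x ∈ I₀ := by
      have h1 : algebraMap S L ((algebraMap R S r) * x) ∈ J := hm'
      rw [map_mul] at h1
      exact (Ideal.unit_mul_mem_iff_mem J hu).mp h1
    simp only [Submodule.mem_bot, Submodule.mkQ_apply, Submodule.Quotient.mk_eq_zero,
      Submodule.restrictScalars_mem]
    exact hx
  -- saturation step
  have hsat : ∀ y : S ⊗[R] P, (algebraMap R (S ⊗[R] P) r) * y ∈ K → y ∈ K := by
    intro y hy
    rw [hker] at hy ⊢
    have h1 : (algebraMap R (S ⊗[R] P) r) * y = r • y := by rw [Algebra.smul_def]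
    rw [h1, map_smul] at hy
    have h2 : LinearMap.rTensor P (LinearMap.lsmul R (S ⧸ (I₀.restrictScalars R)) r) =
        LinearMap.lsmul R ((S ⧸ (I₀.restrictScalars R)) ⊗[R] P) r := by
      apply TensorProduct.ext'
      intro m p
      simp [TensorProduct.smul_tmul']
    have h3 := Module.Flat.rTensor_preserves_injective_linearMap (M := P) _ hmu
    have h4 : (LinearMap.rTensor P (LinearMap.lsmul R (S ⧸ (I₀.restrictScalars R)) r)) (ψ y)
        = 0 := by
      rw [h2]
      simpa using hy
    exact h3 (by simpa using h4)
  have hpow : ∀ (n : ℕ) (y : S ⊗[R] P), (algebraMap R (S ⊗[R] P) r) ^ n * y ∈ K → y ∈ K := by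
    intro n
    induction n with
    | zero => intro y hy; simpa using hy
    | succ n ih =>
      intro y hy
      have : (algebraMap R (S ⊗[R] P) r) ^ n * ((algebraMap R (S ⊗[R] P) r) * y) ∈ K := by
        rw [← mul_assoc, ← pow_succ]
        exact hy
      exact hsat y (ih _ this)
  -- the contraction of the extension of K to Lh is K
  have hcm : (K.map (algebraMap (S ⊗[R] P) Lh)).comap (algebraMap (S ⊗[R] P) Lh) = K := by
    refine le_antisymm ?_ Ideal.le_comap_map
    intro x hx
    rw [Ideal.mem_comap] at hx
    obtain ⟨⟨⟨k, hk⟩, s⟩, hxs⟩ :=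
      (IsLocalization.mem_map_algebraMap_iff
        (Submonoid.powers (algebraMap R (S ⊗[R] P) r)) Lh).mp hx
    obtain ⟨n, hn⟩ := s.2
    have h0 : algebraMap (S ⊗[R] P) Lh (x * s.1 - k) = 0 := by
      rw [map_sub, map_mul, hxs, sub_self]
    obtain ⟨t, ht⟩ := (IsLocalization.map_eq_zero_iff
      (Submonoid.powers (algebraMap R (S ⊗[R] P) r)) Lh _).mp h0
    obtain ⟨c, hc⟩ := t.2
    have hc' : (algebraMap R (S ⊗[R] P) r) ^ c = (t : S ⊗[R] P) := hc
    have hn' : (algebraMap R (S ⊗[R] P) r) ^ n = (s : S ⊗[R] P) := hn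
    have h6 : (t : S ⊗[R] P) * (x * s.1 - k) = 0 := ht
    have h5 : (algebraMap R (S ⊗[R] P) r) ^ (c + n) * x ∈ K := by
      have h8 : (algebraMap R (S ⊗[R] P) r) ^ (c + n) * x
          = (algebraMap R (S ⊗[R] P) r) ^ c * k := by
        rw [pow_add, hc', hn']
        linear_combination h6
      rw [h8, hc']
      exact K.mul_mem_left _ hk
    exact hpow _ x h5
  -- the extension Ĵ equals the extension of K
  have hJK : J.map φ = K.map (algebraMap (S ⊗[R] P) Lh) := by
    have h0 : J = I₀.map (algebraMap S L) :=
      (IsLocalization.map_comap (Submonoid.powers (algebraMap R S r)) L J).symm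
    rw [h0, Ideal.map_map, Ideal.map_map]
    congr 1
    ext s
    exact hφ s
  rw [hJK, hcm]
  rw [← Ideal.comap_comap, hcm]
  exact le_antisymm (Ideal.map_mono Ideal.le_comap_map) Ideal.map_comap_le


/-- let `S` be a flat `ℂ[a]`-algebra and `Ŝ = S ⊗_{ℂ[a]} ℂ[[a]]`; write
`S_a`, `Ŝ_a` for the localisations at `a`, and let `φ : S_a → Ŝ_a` be the natural map
(the one compatible with `S → Ŝ → Ŝ_a`).  For an ideal `J ⊆ S_a`, let `Ĵ ⊆ Ŝ_a` be its
extension, `Î = Ĵ ∩ Ŝ` and `I = S ∩ Ĵ`.  Then `Î` equals the extension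
`I ⊗_{ℂ[a]} ℂ[[a]]` of `I` along `S → Ŝ`. -/
theorem stmt8 (S : Type*) [CommRing S] [Algebra (Polynomial ℂ) S]
    [Module.Flat (Polynomial ℂ) S]
    (φ : Localization.Away (algebraMap (Polynomial ℂ) S Polynomial.X) →+*
      Localization.Away
        (algebraMap (Polynomial ℂ) (S ⊗[Polynomial ℂ] PowerSeries ℂ) Polynomial.X))
    (hφ : ∀ s : S,
      φ (algebraMap S (Localization.Away (algebraMap (Polynomial ℂ) S Polynomial.X)) s) =
        algebraMap (S ⊗[Polynomial ℂ] PowerSeries ℂ) _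
          (Algebra.TensorProduct.includeLeftRingHom s))
    (J : Ideal (Localization.Away (algebraMap (Polynomial ℂ) S Polynomial.X))) :
    (J.map φ).comap
        (algebraMap (S ⊗[Polynomial ℂ] PowerSeries ℂ)
          (Localization.Away
            (algebraMap (Polynomial ℂ) (S ⊗[Polynomial ℂ] PowerSeries ℂ) Polynomial.X))) =
      Ideal.map (Algebra.TensorProduct.includeLeftRingHom :
          S →+* S ⊗[Polynomial ℂ] PowerSeries ℂ)
        ((J.map φ).comap
          ((algebraMap (S ⊗[Polynomial ℂ] PowerSeries ℂ)
            (Localization.Away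
              (algebraMap (Polynomial ℂ) (S ⊗[Polynomial ℂ] PowerSeries ℂ)
                Polynomial.X))).comp
            (Algebra.TensorProduct.includeLeftRingHom :
              S →+* S ⊗[Polynomial ℂ] PowerSeries ℂ))) :=
  aux8 Polynomial.X φ hφ J
end
end

section
/- Let R be a ℂ-algebra, λ ∈ ℕ, A_λ = λ²/4 + λ/2, and let f = A_λ·t⁻² + Σ_{i≥−1} z_i tⁱ ∈ R((t)). Then f belongs to Op₁^λ(R) (i.e., there exists ψ ∈ R[[t]] with f = A_λ/t² − (λ/t)ψ + ψ² + ψ') if and only if there exists a formal power series φ(t) ∈ R[[t]] with φ(0) = 1 such that y = t^{−λ/2}φ(t) formally solves ÿ = f·y, i.e., φ satisfies t²φ'' − λtφ' + (A_λ − t²f)φ = 0. -/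
open PowerSeries

/-!
After multiplying by `t²`, membership in `Op₁^λ` is the Riccati equation
`λ t ψ − t² ψ² − t² ψ′ = A_λ − t² f` for `ψ`, and the ODE is a linear equation for `φ`.
The two correspond under `ψ = φ′ / φ`: a series with `φ(0) = 1` is a unit, and conversely
`φ = exp ∫ ψ` solves `φ′ = ψ φ` (this is where division by integers is needed), after which
`φ″ = (ψ′ + ψ²) φ` turns one equation into the other.
-/

namespace PowerSeries

variable {R : Type*} [CommRing R]

theorem derivative_derivative_of_derivative_eq_mul {φ ψ : R⟦X⟧} (h : d⁄dX R φ = ψ * φ) :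
    d⁄dX R (d⁄dX R φ) = (d⁄dX R ψ + ψ ^ 2) * φ := by
  rw [h, Derivation.leibniz, h, smul_eq_mul, smul_eq_mul]
  ring

/-- `t² (λ t⁻¹ ψ − ψ² − ψ′)`: this is `A_λ − t² f` when `f = A_λ t⁻² − λ t⁻¹ ψ + ψ² + ψ′`. -/
noncomputable def riccatiTerm (l : R) (ψ : R⟦X⟧) : R⟦X⟧ :=
  C l * (X * ψ) - X ^ 2 * ψ ^ 2 - X ^ 2 * d⁄dX R ψ

theorem secondOrder_eq_sub_riccatiTerm_mul (l : R) (G : R⟦X⟧) {φ ψ : R⟦X⟧}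
    (h : d⁄dX R φ = ψ * φ) :
    X ^ 2 * d⁄dX R (d⁄dX R φ) - C l * (X * d⁄dX R φ) + G * φ = (G - riccatiTerm l ψ) * φ := by
  rw [derivative_derivative_of_derivative_eq_mul h, h, riccatiTerm]
  ring

section Rat

variable [Algebra ℚ R]

/-- `exp (∫ ψ)`, built from the recursion `(n + 1) φₙ₊₁ = ∑ₖ ψₖ φₙ₋ₖ` read off `φ′ = ψ φ`. -/
noncomputable def expIntegral (ψ : R⟦X⟧) : R⟦X⟧ :=
  mk go
where
  go : ℕ → R
    | 0 => 1
    | n + 1 => algebraMap ℚ R (n + 1)⁻¹ * ∑ k ∈ Finset.range (n + 1), coeff k ψ * go (n - k)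
  decreasing_by omega

@[simp]
theorem constantCoeff_expIntegral (ψ : R⟦X⟧) : constantCoeff (expIntegral ψ) = 1 := by
  simp [expIntegral, expIntegral.go]

theorem derivative_expIntegral (ψ : R⟦X⟧) :
    d⁄dX R (expIntegral ψ) = ψ * expIntegral ψ := by
  ext n
  have hn : ((n : R) + 1) * algebraMap ℚ R (n + 1)⁻¹ = 1 := by
    rw [← map_natCast (algebraMap ℚ R), ← map_one (algebraMap ℚ R), ← map_add, ← map_mul,
      mul_inv_cancel₀ (by positivity)]
  rw [coeff_derivative, coeff_mul, Finset.Nat.sum_antidiagonal_eq_sum_range_succ_mk]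
  simp only [expIntegral, coeff_mk]
  rw [expIntegral.go, mul_comm, ← mul_assoc, hn, one_mul]

theorem exists_riccatiTerm_eq_iff (l : R) (G : R⟦X⟧) :
    (∃ ψ, riccatiTerm l ψ = G) ↔ ∃ φ : R⟦X⟧, constantCoeff φ = 1 ∧
      X ^ 2 * d⁄dX R (d⁄dX R φ) - C l * (X * d⁄dX R φ) + G * φ = 0 := by
  constructor
  · rintro ⟨ψ, rfl⟩
    refine ⟨expIntegral ψ, constantCoeff_expIntegral ψ, ?_⟩
    rw [secondOrder_eq_sub_riccatiTerm_mul l _ (derivative_expIntegral ψ), sub_self, zero_mul]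
  · rintro ⟨φ, hφ, hode⟩
    obtain ⟨u, rfl⟩ : IsUnit φ := isUnit_iff_constantCoeff.mpr (hφ ▸ isUnit_one)
    have hψ : d⁄dX R (u : R⟦X⟧) = (d⁄dX R u * ↑u⁻¹) * u := by simp [mul_assoc]
    rw [secondOrder_eq_sub_riccatiTerm_mul l G hψ, Units.mul_left_eq_zero, sub_eq_zero] at hode
    exact ⟨_, hode.symm⟩

end Rat

end PowerSeries

namespace HahnSeries

variable {R : Type*} [CommRing R]

theorem isUnit_single_one (a : ℤ) : IsUnit (single a (1 : R) : LaurentSeries R) :=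
  isUnit_iff_exists_inv.mpr ⟨single (-a) 1, by simp [single_mul_single]⟩

theorem exists_single_mul_eq_ofPowerSeries {f : LaurentSeries R} (m : ℤ)
    (hf : ∀ n : ℤ, n < -m → f.coeff n = 0) :
    ∃ B : PowerSeries R, single m 1 * f = ofPowerSeries ℤ R B := by
  refine ⟨PowerSeries.mk fun n => f.coeff (n - m), ?_⟩
  ext n
  rw [coeff_single_mul, one_mul, PowerSeries.coeff_coe]
  split_ifs with hn
  · exact hf _ (by omega)
  · rw [PowerSeries.coeff_mk, Int.natAbs_of_nonneg (not_lt.mp hn)]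

end HahnSeries

open HahnSeries (single ofPowerSeries ofPowerSeries_injective single_mul_single
  isUnit_single_one exists_single_mul_eq_ofPowerSeries)

theorem single_two_mul_eq_ofPowerSeries_C_sub_riccatiTerm {R : Type*} [CommRing R] (a l : R)
    (ψ : R⟦X⟧) :
    single (2 : ℤ) 1 * (single (-2 : ℤ) a - single (-1 : ℤ) l * ofPowerSeries ℤ R ψ
      + ofPowerSeries ℤ R (ψ ^ 2) + ofPowerSeries ℤ R (d⁄dX R ψ))
      = ofPowerSeries ℤ R (C a - riccatiTerm l ψ) := by
  rw [mul_add, mul_add, mul_sub, ← mul_assoc, single_mul_single, single_mul_single]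
  simp [riccatiTerm, HahnSeries.C_apply, ← mul_assoc]
  ring

theorem stmt9_general (R : Type*) [CommRing R] [Algebra ℂ R] (lam : ℕ) (Alam : ℂ)
    (f : LaurentSeries R)
    (hf1 : ∀ n : ℤ, n < -2 → f.coeff n = 0) :
    (∃ ψ : PowerSeries R,
      f = HahnSeries.single (-2 : ℤ) (algebraMap ℂ R Alam)
          - HahnSeries.single (-1 : ℤ) ((lam : R)) * (HahnSeries.ofPowerSeries ℤ R ψ)
          + HahnSeries.ofPowerSeries ℤ R (ψ ^ 2)
          + HahnSeries.ofPowerSeries ℤ R (PowerSeries.derivative R ψ)) ↔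
    (∃ φ : PowerSeries R, PowerSeries.constantCoeff φ = 1 ∧
      HahnSeries.ofPowerSeries ℤ R
          (PowerSeries.X ^ 2 * PowerSeries.derivative R (PowerSeries.derivative R φ))
        - HahnSeries.single (0 : ℤ) ((lam : R)) *
            HahnSeries.ofPowerSeries ℤ R (PowerSeries.X * PowerSeries.derivative R φ)
        + (HahnSeries.single (0 : ℤ) (algebraMap ℂ R Alam)
            - HahnSeries.single (2 : ℤ) 1 * f) * HahnSeries.ofPowerSeries ℤ R φ = 0) := by
  let _ : Algebra ℚ R := ((algebraMap ℂ R).comp (algebraMap ℚ ℂ)).toAlgebra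
  obtain ⟨B, hB⟩ := exists_single_mul_eq_ofPowerSeries 2 hf1
  set A := algebraMap ℂ R Alam
  have hode (φ : R⟦X⟧) : ofPowerSeries ℤ R (X ^ 2 * d⁄dX R (d⁄dX R φ))
        - single (0 : ℤ) (lam : R) * ofPowerSeries ℤ R (X * d⁄dX R φ)
        + (single (0 : ℤ) A - single (2 : ℤ) 1 * f) * ofPowerSeries ℤ R φ
      = ofPowerSeries ℤ R (X ^ 2 * d⁄dX R (d⁄dX R φ) - C (lam : R) * (X * d⁄dX R φ)
        + (C A - B) * φ) := by
    simp only [hB, map_add, map_sub, map_mul, HahnSeries.ofPowerSeries_C, HahnSeries.C_apply]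
  have hopers (ψ : R⟦X⟧) : f = single (-2 : ℤ) A - single (-1 : ℤ) (lam : R) * ofPowerSeries ℤ R ψ
        + ofPowerSeries ℤ R (ψ ^ 2) + ofPowerSeries ℤ R (d⁄dX R ψ) ↔
      riccatiTerm (lam : R) ψ = C A - B := by
    rw [← (isUnit_single_one 2).mul_right_inj, hB,
      single_two_mul_eq_ofPowerSeries_C_sub_riccatiTerm, ofPowerSeries_injective.eq_iff,
      eq_sub_iff_add_eq, ← eq_sub_iff_add_eq']
  simp_rw [hopers, hode, map_eq_zero_iff _ ofPowerSeries_injective]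
  exact exists_riccatiTerm_eq_iff _ _

/-- for a `ℂ`-algebra `R`, `λ ∈ ℕ`, `A_λ = λ²/4 + λ/2`, and
`f = A_λ t⁻² + Σ_{i ≥ −1} zᵢ tⁱ ∈ R((t))`, the following are equivalent:
(1) `f ∈ Op₁^λ(R)`, i.e. there is `ψ ∈ R[[t]]` with `f = A_λ/t² − (λ/t)ψ + ψ² + ψ′`;
(2) there is `φ ∈ R[[t]]` with `φ(0) = 1` such that `y = t^{−λ/2}φ(t)` formally solves
`ÿ = f y`, i.e. `t²φ″ − λtφ′ + (A_λ − t²f)φ = 0`. -/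
theorem stmt9 (R : Type*) [CommRing R] [Algebra ℂ R] (lam : ℕ) (Alam : ℂ)
    (hA : Alam = (lam : ℂ) ^ 2 / 4 + (lam : ℂ) / 2)
    (f : LaurentSeries R)
    (hf1 : ∀ n : ℤ, n < -2 → f.coeff n = 0)
    (hf2 : f.coeff (-2) = algebraMap ℂ R Alam) :
    (∃ ψ : PowerSeries R,
      f = HahnSeries.single (-2 : ℤ) (algebraMap ℂ R Alam)
          - HahnSeries.single (-1 : ℤ) ((lam : R)) * (HahnSeries.ofPowerSeries ℤ R ψ)
          + HahnSeries.ofPowerSeries ℤ R (ψ ^ 2)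
          + HahnSeries.ofPowerSeries ℤ R (PowerSeries.derivative R ψ)) ↔
    (∃ φ : PowerSeries R, PowerSeries.constantCoeff φ = 1 ∧
      HahnSeries.ofPowerSeries ℤ R
          (PowerSeries.X ^ 2 * PowerSeries.derivative R (PowerSeries.derivative R φ))
        - HahnSeries.single (0 : ℤ) ((lam : R)) *
            HahnSeries.ofPowerSeries ℤ R (PowerSeries.X * PowerSeries.derivative R φ)
        + (HahnSeries.single (0 : ℤ) (algebraMap ℂ R Alam)
            - HahnSeries.single (2 : ℤ) 1 * f) * HahnSeries.ofPowerSeries ℤ R φ = 0) :=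
  stmt9_general R lam Alam f hf1
end

section
/- For λ ∈ ℕ, consider the system of equations in variables ψ₀,…,ψ_{λ−1}: z_{−1} = −λψ₀, z_k = Σ_{i+j=k} ψᵢψⱼ − (λ−1−k)ψ_{k+1} for 0 ≤ k ≤ λ−2, and z_{λ−1} = Σ_{i+j=λ−1} ψᵢψⱼ. Solving the first λ equations recursively for ψ₀,…,ψ_{λ−1} expresses the last equation as z_{λ−1} = P_λ(z_{−1},…,z_{λ−2}) for a polynomial P_λ which is homogeneous of degree λ+1 when z_i is assigned degree i+2. Moreover, every monomial of total degree λ+1 in z_{−1},…,z_{λ−2} appears in P_λ with a nonzero coefficient. -/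
open MvPolynomial Finset

noncomputable def Qp (lam : ℕ) : ℕ → MvPolynomial (Fin lam) ℚ
  | 0 => (-(lam : ℚ)⁻¹) • (if h : 0 < lam then X (⟨0, h⟩ : Fin lam) else 0)
  | (k+1) => ((lam : ℚ) - 1 - k)⁻¹ •
      ((∑ i ∈ (Finset.range (k+1)).attach, Qp lam i.1 * Qp lam (k - i.1)) -
        if h : k+1 < lam then X (⟨k+1, h⟩ : Fin lam) else 0)
  decreasing_by
  · exact Finset.mem_range.mp i.2
  · exact Nat.lt_succ_of_le (Nat.sub_le _ _)

lemma Qp_zero (lam : ℕ) : Qp lam 0 =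
    (-(lam : ℚ)⁻¹) • (if h : 0 < lam then X (⟨0, h⟩ : Fin lam) else 0) := by
  rw [Qp]

lemma Qp_succ (lam k : ℕ) : Qp lam (k+1) = ((lam : ℚ) - 1 - k)⁻¹ •
    ((∑ i ∈ Finset.range (k+1), Qp lam i * Qp lam (k - i)) -
      if h : k+1 < lam then X (⟨k+1, h⟩ : Fin lam) else 0) := by
  rw [Qp, Finset.sum_attach (Finset.range (k+1)) (fun i => Qp lam i * Qp lam (k - i))]

noncomputable def sg {n : ℕ} (d : Fin n →₀ ℕ) : ℚ := (-1) ^ (Finsupp.degree d)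

lemma deg_add {n : ℕ} (a b : Fin n →₀ ℕ) :
    Finsupp.degree (a + b) = Finsupp.degree a + Finsupp.degree b := by
  rw [Finsupp.degree_eq_weight_one]
  exact map_add _ _ _

lemma sg_add {n : ℕ} (a b : Fin n →₀ ℕ) : sg (a + b) = sg a * sg b := by
  simp [sg, deg_add, pow_add]

lemma degree_single {n : ℕ} (m : Fin n) : Finsupp.degree (Finsupp.single m 1) = 1 := by
  rw [Finsupp.degree_eq_weight_one]
  simp [Finsupp.weight_apply, Finsupp.sum_single_index]

lemma sg_single {n : ℕ} (m : Fin n) : sg (Finsupp.single m 1) = -1 := by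
  simp [sg, degree_single]

lemma mulA {n : ℕ} {p q : MvPolynomial (Fin n) ℚ}
    (hp : ∀ d, 0 ≤ sg d * coeff d p) (hq : ∀ d, 0 ≤ sg d * coeff d q) :
    ∀ d, 0 ≤ sg d * coeff d (p * q) := by
  intro d
  rw [coeff_mul, Finset.mul_sum]
  apply Finset.sum_nonneg
  rintro ⟨a, b⟩ hab
  rw [Finset.HasAntidiagonal.mem_antidiagonal] at hab
  have : sg d * (coeff a p * coeff b q) = (sg a * coeff a p) * (sg b * coeff b q) := by
    rw [← hab, sg_add]; ring
  rw [this]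
  exact mul_nonneg (hp a) (hq b)

lemma mulS {n : ℕ} {p q : MvPolynomial (Fin n) ℚ}
    (hp : ∀ d, 0 ≤ sg d * coeff d p) (hq : ∀ d, 0 ≤ sg d * coeff d q)
    {a b : Fin n →₀ ℕ} (ha : 0 < sg a * coeff a p) (hb : 0 < sg b * coeff b q) :
    0 < sg (a + b) * coeff (a + b) (p * q) := by
  rw [coeff_mul, Finset.mul_sum]
  apply Finset.sum_pos'
  · rintro ⟨x, y⟩ hxy
    rw [Finset.HasAntidiagonal.mem_antidiagonal] at hxy
    have : sg (a+b) * (coeff x p * coeff y q) = (sg x * coeff x p) * (sg y * coeff y q) := by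
      rw [← hxy, sg_add]; ring
    rw [this]
    exact mul_nonneg (hp x) (hq y)
  · refine ⟨(a, b), Finset.HasAntidiagonal.mem_antidiagonal.mpr rfl, ?_⟩
    have : sg (a+b) * (coeff a p * coeff b q) = (sg a * coeff a p) * (sg b * coeff b q) := by
      rw [sg_add]; ring
    rw [this]
    exact mul_pos ha hb

lemma split {n : ℕ} (d : Fin n →₀ ℕ) (hd : d ≠ 0) :
    ∃ (m : Fin n) (d' : Fin n →₀ ℕ), d = Finsupp.single m 1 + d' := by
  obtain ⟨m, hm⟩ : ∃ m, d m ≠ 0 := by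
    by_contra h
    push_neg at h
    exact hd (Finsupp.ext h)
  have h1 : 1 ≤ d m := Nat.one_le_iff_ne_zero.mpr hm
  refine ⟨m, d - Finsupp.single m 1, ?_⟩
  ext a
  simp only [Finsupp.add_apply, Finsupp.tsub_apply, Finsupp.single_apply]
  rcases eq_or_ne m a with rfl | hne
  · simp only [if_true]; omega
  · simp [hne]

lemma weight_pos {n : ℕ} {d : Fin n →₀ ℕ} (hd : d ≠ 0) :
    1 ≤ Finsupp.weight (fun m : Fin n => (m : ℕ) + 1) d := by
  obtain ⟨m, hm⟩ : ∃ m, d m ≠ 0 := by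
    by_contra h; push_neg at h; exact hd (Finsupp.ext h)
  calc 1 ≤ (m : ℕ) + 1 := by omega
  _ ≤ _ := Finsupp.le_weight_of_ne_zero' (fun m : Fin n => (m : ℕ) + 1) hm

lemma weight_single {n : ℕ} (m : Fin n) :
    Finsupp.weight (fun m : Fin n => (m : ℕ) + 1) (Finsupp.single m 1) = (m : ℕ) + 1 := by
  simp [Finsupp.weight_apply, Finsupp.sum_single_index]

lemma Qp_main (lam : ℕ) : ∀ j, j < lam →
    IsWeightedHomogeneous (fun m : Fin lam => (m : ℕ) + 1) (Qp lam j) (j + 1) ∧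
    (∀ d, 0 ≤ sg d * coeff d (Qp lam j)) ∧
    (∀ d, Finsupp.weight (fun m : Fin lam => (m : ℕ) + 1) d = j + 1 →
      0 < sg d * coeff d (Qp lam j)) := by
  intro j
  induction j using Nat.strong_induction_on with
  | _ j IH =>
  intro hj
  match j, hj with
  | 0, hj =>
    rw [Qp_zero, dif_pos hj]
    have hlQ : (0:ℚ) < (lam : ℚ) := by exact_mod_cast hj
    refine ⟨?_, ?_, ?_⟩
    · intro d hd
      rw [coeff_smul, smul_eq_mul, coeff_X'] at hd
      have hd1 : Finsupp.single (⟨0, hj⟩ : Fin lam) 1 = d := by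
        by_contra h; rw [if_neg h, mul_zero] at hd; exact hd rfl
      rw [← hd1, weight_single]
    · intro d
      rw [coeff_smul, smul_eq_mul, coeff_X']
      by_cases h : Finsupp.single (⟨0, hj⟩ : Fin lam) 1 = d
      · rw [if_pos h, ← h, sg_single, mul_one]
        nlinarith [inv_pos.mpr hlQ]
      · rw [if_neg h]; simp
    · intro d hd
      have hd0 : d ≠ 0 := by
        intro h; rw [h, map_zero] at hd; omega
      obtain ⟨m, d', rfl⟩ := split d hd0
      have hdd : (m : ℕ) + 1 + Finsupp.weight (fun m : Fin lam => (m : ℕ) + 1) d' = 1 := by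
        rw [map_add, weight_single] at hd; exact hd
      have hd'0 : d' = 0 := by
        by_contra h
        have := weight_pos h
        omega
      subst hd'0
      rw [map_zero] at hdd
      have hm : m = (⟨0, hj⟩ : Fin lam) := by
        apply Fin.ext
        show (m : ℕ) = 0
        omega
      subst hm
      rw [add_zero, coeff_smul, smul_eq_mul, coeff_X', if_pos rfl, mul_one, sg_single]
      nlinarith [inv_pos.mpr hlQ]
  | (k+1), hj =>
    have hc : (0:ℚ) < ((lam : ℚ) - 1 - k)⁻¹ := by
      have : (k:ℚ) + 2 ≤ (lam : ℚ) := by exact_mod_cast hj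
      have : (0:ℚ) < (lam : ℚ) - 1 - k := by linarith
      positivity
    -- facts about the summands
    have hQ : ∀ i ∈ Finset.range (k+1),
        IsWeightedHomogeneous (fun m : Fin lam => (m : ℕ) + 1) (Qp lam i) (i+1) ∧
        (∀ d, 0 ≤ sg d * coeff d (Qp lam i)) ∧
        (∀ d, Finsupp.weight (fun m : Fin lam => (m : ℕ) + 1) d = i + 1 → 0 < sg d * coeff d (Qp lam i)) := by
      intro i hi
      rw [Finset.mem_range] at hi
      exact IH i hi (hi.trans hj)
    have hQ' : ∀ i ∈ Finset.range (k+1),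
        IsWeightedHomogeneous (fun m : Fin lam => (m : ℕ) + 1) (Qp lam (k-i)) ((k-i)+1) ∧
        (∀ d, 0 ≤ sg d * coeff d (Qp lam (k-i))) ∧
        (∀ d, Finsupp.weight (fun m : Fin lam => (m : ℕ) + 1) d = (k-i) + 1 → 0 < sg d * coeff d (Qp lam (k-i))) := by
      intro i hi
      rw [Finset.mem_range] at hi
      exact IH (k-i) (by omega) (by omega)
    have hSA : ∀ d, 0 ≤ sg d * coeff d
        (∑ i ∈ Finset.range (k+1), Qp lam i * Qp lam (k - i)) := by
      intro d
      rw [coeff_sum, Finset.mul_sum]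
      exact Finset.sum_nonneg fun i hi => mulA (hQ i hi).2.1 (hQ' i hi).2.1 d
    have hXc : ∀ d : Fin lam →₀ ℕ,
        coeff d (Qp lam (k+1)) = ((lam : ℚ) - 1 - k)⁻¹ *
          (coeff d (∑ i ∈ Finset.range (k+1), Qp lam i * Qp lam (k - i)) -
            coeff d (X (⟨k+1, hj⟩ : Fin lam))) := by
      intro d
      rw [Qp_succ, dif_pos hj, coeff_smul, smul_eq_mul, coeff_sub]
    refine ⟨?_, ?_, ?_⟩
    · -- homogeneity
      have hmem : Qp lam (k+1) ∈ weightedHomogeneousSubmodule ℚ (fun m : Fin lam => (m : ℕ) + 1) (k+2) := by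
        rw [Qp_succ, dif_pos hj]
        refine Submodule.smul_mem _ _ (Submodule.sub_mem _ ?_ ?_)
        · apply Submodule.sum_mem
          intro i hi
          rw [mem_weightedHomogeneousSubmodule]
          have hik : i ≤ k := by rw [Finset.mem_range] at hi; omega
          have := (hQ i hi).1.mul (hQ' i hi).1
          have he : (i+1) + ((k-i)+1) = k+2 := by omega
          rwa [he] at this
        · rw [mem_weightedHomogeneousSubmodule]
          have := isWeightedHomogeneous_X ℚ (fun m : Fin lam => (m : ℕ) + 1) (⟨k+1, hj⟩ : Fin lam)
          exact this
      rw [mem_weightedHomogeneousSubmodule] at hmem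
      exact hmem
    · -- sign nonneg
      intro d
      rw [hXc d, coeff_X']
      have h2 : sg d * (if Finsupp.single (⟨k+1, hj⟩ : Fin lam) 1 = d then (1:ℚ) else 0) ≤ 0 := by
        by_cases h : Finsupp.single (⟨k+1, hj⟩ : Fin lam) 1 = d
        · rw [if_pos h, ← h, sg_single]; norm_num
        · rw [if_neg h, mul_zero]
      have := hSA d
      nlinarith [hSA d]
    · -- strict positivity
      intro d hd
      have hd0 : d ≠ 0 := by
        intro h; rw [h, map_zero] at hd; omega
      obtain ⟨m, d', rfl⟩ := split d hd0
      have hdd : (m : ℕ) + 1 + Finsupp.weight (fun m : Fin lam => (m : ℕ) + 1) d' = k + 2 := by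
        rw [map_add, weight_single] at hd; exact hd
      by_cases hd' : d' = 0
      · -- d = single m 1 with m = k+1
        subst hd'
        have hm : m = (⟨k+1, hj⟩ : Fin lam) := by
          apply Fin.ext
          rw [map_zero] at hdd
          show (m : ℕ) = k+1
          omega
        subst hm
        rw [add_zero]
        rw [hXc, coeff_X', if_pos rfl]
        have hS0 : coeff (Finsupp.single (⟨k+1, hj⟩ : Fin lam) 1)
            (∑ i ∈ Finset.range (k+1), Qp lam i * Qp lam (k - i)) = 0 := by
          rw [coeff_sum]
          apply Finset.sum_eq_zero
          intro i hi
          rw [coeff_mul]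
          apply Finset.sum_eq_zero
          rintro ⟨a, b⟩ hab
          rw [Finset.HasAntidiagonal.mem_antidiagonal] at hab
          have hdeg : Finsupp.degree a + Finsupp.degree b = 1 := by
            rw [← deg_add, hab, degree_single]
          rcases Nat.eq_zero_or_pos (Finsupp.degree a) with h0 | h0
          · have ha0 : a = 0 := (Finsupp.degree_eq_zero_iff a).mp h0
            subst ha0
            have : coeff 0 (Qp lam i) = 0 := by
              apply (hQ i hi).1.coeff_eq_zero
              rw [map_zero]; omega
            rw [this, zero_mul]
          · have hb0 : b = 0 := by
              rw [← Finsupp.degree_eq_zero_iff]; omega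
            subst hb0
            have : coeff 0 (Qp lam (k-i)) = 0 := by
              apply (hQ' i hi).1.coeff_eq_zero
              rw [map_zero]; omega
            rw [this, mul_zero]
        rw [hS0, sg_single]
        rw [zero_sub]
        nlinarith
      · -- d has at least two variables
        have hwp := weight_pos hd'
        have hmk : (m : ℕ) ≤ k := by omega
        have hwd' : Finsupp.weight (fun m : Fin lam => (m : ℕ) + 1) d' = (k - (m : ℕ)) + 1 := by omega
        have hXne : ¬ (Finsupp.single (⟨k+1, hj⟩ : Fin lam) 1 = Finsupp.single m 1 + d') := by
          intro h
          have := congrArg Finsupp.degree h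
          rw [degree_single, deg_add, degree_single] at this
          have : Finsupp.degree d' = 0 := by omega
          exact hd' ((Finsupp.degree_eq_zero_iff d').mp this)
        rw [hXc, coeff_X', if_neg hXne, sub_zero]
        rw [mul_comm (((lam : ℚ) - 1 - k)⁻¹) _, ← mul_assoc]
        apply mul_pos _ hc
        rw [coeff_sum, Finset.mul_sum]
        apply Finset.sum_pos'
        · intro i hi
          exact mulA (hQ i hi).2.1 (hQ' i hi).2.1 _
        · refine ⟨(m : ℕ), Finset.mem_range.mpr (by omega), ?_⟩
          apply mulS (hQ (m : ℕ) (Finset.mem_range.mpr (by omega))).2.1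
            (hQ' (m : ℕ) (Finset.mem_range.mpr (by omega))).2.1
          · exact (hQ (m : ℕ) (Finset.mem_range.mpr (by omega))).2.2
              (Finsupp.single m 1) (weight_single m)
          · exact (hQ' (m : ℕ) (Finset.mem_range.mpr (by omega))).2.2 d' hwd'

noncomputable def Pp (lam : ℕ) : MvPolynomial (Fin lam) ℚ :=
  ∑ i ∈ Finset.range lam, Qp lam i * Qp lam (lam - 1 - i)

lemma Pp_hom (lam : ℕ) :
    IsWeightedHomogeneous (fun m : Fin lam => (m : ℕ) + 1) (Pp lam) (lam + 1) := by
  apply IsWeightedHomogeneous.sum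
  intro i hi
  rw [Finset.mem_range] at hi
  have h1 := (Qp_main lam i hi).1
  have h2 := (Qp_main lam (lam - 1 - i) (by omega)).1
  have := h1.mul h2
  have he : (i+1) + ((lam - 1 - i)+1) = lam + 1 := by omega
  rwa [he] at this

lemma Pp_pos (lam : ℕ) (d : Fin lam →₀ ℕ)
    (hd : Finsupp.weight (fun m : Fin lam => (m : ℕ) + 1) d = lam + 1) :
    0 < sg d * coeff d (Pp lam) := by
  have hd0 : d ≠ 0 := by
    intro h; rw [h, map_zero] at hd; omega
  obtain ⟨m, d', rfl⟩ := split d hd0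
  have hl : 0 < lam := m.pos
  have hdd : (m : ℕ) + 1 + Finsupp.weight (fun m : Fin lam => (m : ℕ) + 1) d' = lam + 1 := by
    rw [map_add, weight_single] at hd; exact hd
  have hd' : d' ≠ 0 := by
    intro h
    subst h
    rw [map_zero] at hdd
    have := m.isLt
    omega
  have hwp := weight_pos hd'
  have hm1 : (m : ℕ) ≤ lam - 1 := by have := m.isLt; omega
  have hwd' : Finsupp.weight (fun m : Fin lam => (m : ℕ) + 1) d' = (lam - 1 - (m : ℕ)) + 1 := by
    have := m.isLt; omega
  rw [Pp, coeff_sum, Finset.mul_sum]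
  apply Finset.sum_pos'
  · intro i hi
    rw [Finset.mem_range] at hi
    exact mulA (Qp_main lam i hi).2.1 (Qp_main lam (lam - 1 - i) (by omega)).2.1 _
  · refine ⟨(m : ℕ), Finset.mem_range.mpr m.isLt, ?_⟩
    apply mulS (Qp_main lam (m : ℕ) m.isLt).2.1 (Qp_main lam (lam - 1 - (m : ℕ)) (by omega)).2.1
    · exact (Qp_main lam (m : ℕ) m.isLt).2.2 (Finsupp.single m 1) (weight_single m)
    · exact (Qp_main lam (lam - 1 - (m : ℕ)) (by omega)).2.2 d' hwd'

lemma evalQ0 (lam : ℕ) (hl : 0 < lam) (z : ℤ → ℚ) :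
    MvPolynomial.eval (fun m : Fin lam => z ((m : ℤ) - 1)) (Qp lam 0)
      = -(lam : ℚ)⁻¹ * z (-1) := by
  rw [Qp_zero, dif_pos hl, smul_eq_C_mul, map_mul, eval_C, eval_X]
  norm_num

lemma evalQsucc (lam k : ℕ) (h : k + 1 < lam) (z : ℤ → ℚ) :
    MvPolynomial.eval (fun m : Fin lam => z ((m : ℤ) - 1)) (Qp lam (k+1))
      = ((lam : ℚ) - 1 - k)⁻¹ *
        ((∑ i ∈ Finset.range (k+1),
            MvPolynomial.eval (fun m : Fin lam => z ((m : ℤ) - 1)) (Qp lam i) *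
            MvPolynomial.eval (fun m : Fin lam => z ((m : ℤ) - 1)) (Qp lam (k - i))) - z k) := by
  rw [Qp_succ, dif_pos h, smul_eq_C_mul, map_mul, eval_C, map_sub, map_sum]
  congr 2
  · exact Finset.sum_congr rfl fun i _ => by rw [map_mul]
  · rw [eval_X]
    congr 1
    push_cast
    ring


/-- existence of the polynomial `P_λ` in the variables `z_{−1},…,z_{λ−2}`
(the variable with index `m : Fin λ` stands for `z_{m−1}`) such that:
(a) for all values of the `z_i`, the system
    `z_{−1} = −λψ₀`,
    `z_k = Σ_{i+j=k} ψᵢψⱼ − (λ−1−k)ψ_{k+1}` for `0 ≤ k ≤ λ−1`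
    has a solution `ψ` iff `z_{λ−1} = P_λ(z_{−1},…,z_{λ−2})`;
(b) `P_λ` is weighted homogeneous of degree `λ+1` for the weights `deg z_i = i+2`
    (the variable `m` gets weight `m+1`);
(c) every monomial of weighted degree `λ+1` occurs in `P_λ` with nonzero coefficient. -/
theorem stmt10 (lam : ℕ) :
    ∃ P : MvPolynomial (Fin lam) ℚ,
      (∀ z : ℤ → ℚ,
        ((∃ ψ : ℕ → ℚ,
            z (-1) = -(lam : ℚ) * ψ 0 ∧
            ∀ k : ℕ, k < lam →
              z k = (∑ i ∈ Finset.range (k + 1), ψ i * ψ (k - i))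
                      - ((lam : ℚ) - 1 - k) * ψ (k + 1)) ↔
          z ((lam : ℤ) - 1) = MvPolynomial.eval (fun m : Fin lam => z ((m : ℤ) - 1)) P)) ∧
      MvPolynomial.IsWeightedHomogeneous (fun m : Fin lam => (m : ℕ) + 1) P (lam + 1) ∧
      (∀ d : Fin lam →₀ ℕ, (d.sum fun m k => k * ((m : ℕ) + 1)) = lam + 1 →
        MvPolynomial.coeff d P ≠ 0) := by
  rcases Nat.eq_zero_or_pos lam with rfl | hl
  · refine ⟨0, ?_, ?_, ?_⟩
    · intro z
      constructor
      · rintro ⟨ψ, h1, -⟩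
        simpa using h1
      · intro h
        exact ⟨fun _ => 0, by simpa using h, by omega⟩
    · exact isWeightedHomogeneous_zero ℚ _ _
    · intro d hd
      have : d = 0 := Subsingleton.elim d 0
      subst this
      simp at hd
  · refine ⟨Pp lam, ?_, Pp_hom lam, ?_⟩
    · intro z
      set f : Fin lam → ℚ := fun m : Fin lam => z ((m : ℤ) - 1) with hf
      have hlQ : ((lam : ℚ)) ≠ 0 := by positivity
      have hco : (lam : ℚ) - 1 - ((lam - 1 : ℕ) : ℚ) = 0 := by
        rw [Nat.cast_sub hl]; push_cast; ring
      constructor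
      · rintro ⟨ψ, h1, h2⟩
        have key : ∀ j, j < lam → ψ j = MvPolynomial.eval f (Qp lam j) := by
          intro j
          induction j using Nat.strong_induction_on with
          | _ j IH =>
          intro hjl
          match j with
          | 0 =>
            rw [hf, evalQ0 lam hl z, h1]
            field_simp
          | (k+1) =>
            have hne : ((lam : ℚ) - 1 - k) ≠ 0 := by
              have : (k : ℚ) + 2 ≤ (lam : ℚ) := by exact_mod_cast hjl
              intro h; rw [sub_eq_zero] at h; nlinarith
            have e1 := h2 k (by omega)
            have e2 : (∑ i ∈ Finset.range (k+1), ψ i * ψ (k-i))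
                = ∑ i ∈ Finset.range (k+1),
                    MvPolynomial.eval f (Qp lam i) * MvPolynomial.eval f (Qp lam (k-i)) := by
              refine Finset.sum_congr rfl fun i hi => ?_
              rw [Finset.mem_range] at hi
              rw [IH i hi (by omega), IH (k-i) (by omega) (by omega)]
            rw [hf, evalQsucc lam k hjl z, ← hf, ← e2]
            have e3 : (∑ i ∈ Finset.range (k+1), ψ i * ψ (k-i)) - z k
                = ((lam : ℚ) - 1 - k) * ψ (k+1) := by
              rw [e1]; ring
            rw [e3, ← mul_assoc, inv_mul_cancel₀ hne, one_mul]
        have e3 := h2 (lam - 1) (by omega)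
        have hrange : lam - 1 + 1 = lam := by omega
        rw [hrange, hco, zero_mul, sub_zero] at e3
        have e4 : (∑ i ∈ Finset.range lam, ψ i * ψ (lam - 1 - i))
            = MvPolynomial.eval f (Pp lam) := by
          rw [Pp, map_sum]
          refine Finset.sum_congr rfl fun i hi => ?_
          rw [Finset.mem_range] at hi
          rw [map_mul, key i hi, key (lam - 1 - i) (by omega)]
        have hz1 : (((lam - 1 : ℕ) : ℤ)) = (lam : ℤ) - 1 := by omega
        rw [← hz1, e3, e4]
      · intro hz
        refine ⟨fun j => MvPolynomial.eval f (Qp lam j), ?_, ?_⟩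
        · dsimp only
          rw [hf, evalQ0 lam hl z]
          field_simp
        · intro k hk
          dsimp only
          rcases Nat.lt_or_ge (k+1) lam with hk1 | hk1
          · rw [hf, evalQsucc lam k hk1 z, ← hf]
            have hne : ((lam : ℚ) - 1 - k) ≠ 0 := by
              have : (k : ℚ) + 2 ≤ (lam : ℚ) := by exact_mod_cast hk1
              intro h; rw [sub_eq_zero] at h; nlinarith
            rw [← mul_assoc, mul_inv_cancel₀ hne, one_mul]
            ring
          · have hkl : k = lam - 1 := by omega
            subst hkl
            rw [hco, zero_mul, sub_zero]
            have hrange : lam - 1 + 1 = lam := by omega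
            rw [hrange]
            have e4 : (∑ i ∈ Finset.range lam,
                MvPolynomial.eval f (Qp lam i) * MvPolynomial.eval f (Qp lam (lam - 1 - i)))
                = MvPolynomial.eval f (Pp lam) := by
              rw [Pp, map_sum]
              exact Finset.sum_congr rfl fun i hi => (map_mul _ _ _).symm
            rw [e4, ← hz]
            congr 1
            omega
    · intro d hd
      have hw : Finsupp.weight (fun m : Fin lam => (m : ℕ) + 1) d = lam + 1 := by
        rw [Finsupp.weight_apply]
        simpa [smul_eq_mul] using hd
      have := Pp_pos lam d hw
      intro h
      rw [h, mul_zero] at this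
      exact lt_irrefl 0 this
end
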